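/- A minimal Markov basis is unique up to sign (i.e., any two minimal Markov bases coincide after possibly replacing some of their moves z by −z) if and only if for every t ∈ ℤ^d with F_t ≠ ∅, either F_t forms a single B_{|t|−1}-equivalence class or F_t has exactly two elements. -/

import Mathlib

/-!
Under homogeneity every point of a fiber `F_t` has total size `|t|`, so a move `z` used inside
`F_t` has degree at most `|t|`, and degree exactly `|t|` only for the step between `z⁻` and `z⁺`.
Hence a move `z` of a minimal Markov basis never has `z⁻` and `z⁺` in the same
`B_{deg z - 1}`-class: moves of smaller degree can always be realised without `z`.

If every fiber is one class or has two points, the fiber of `z⁺` for `z ∈ B₁` is therefore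
`{z⁻, z⁺}`, and any Markov basis must contain the only moves `±z` connecting it.
Conversely, given a fiber with two classes and at least three points, a minimal basis `B` has a
move `z` joining two classes, say `a` and `b`, and a third point `u` reachable from `a` without
`z` and outside the class of `b`; exchanging `z` for `b - u` gives a Markov basis whose minimal
sub-bases contain neither `z` nor `-z`.
-/

open scoped BigOperators

section Defs

variable {ι κ : Type*} [Fintype ι]

/-- Embed a frequency vector `x ∈ ℕ^ι` into `ℤ^ι`. -/
def natToInt (x : ι → ℕ) : ι → ℤ := fun i => (x i : ℤ)

/-- The fiber of `t`: all frequency vectors `x` with `A x = t`. -/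
def fiberOf (A : Matrix κ ι ℤ) (t : κ → ℤ) : Set (ι → ℕ) :=
  {x | A.mulVec (natToInt x) = t}

/-- A move for `A`: an integer vector in the kernel of `A`. -/
def IsMove (A : Matrix κ ι ℤ) (z : ι → ℤ) : Prop := A.mulVec z = 0

/-- The positive part `z⁺` of an integer vector, as a frequency vector. -/
def posOf (z : ι → ℤ) : ι → ℕ := fun i => (z i).toNat

/-- The negative part `z⁻` of an integer vector, as a frequency vector. -/
def negOf (z : ι → ℤ) : ι → ℕ := fun i => (-z i).toNat

/-- The degree of a move: `deg z = |z⁺|`. -/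
def degOf (z : ι → ℤ) : ℕ := ∑ i, posOf z i

/-- One step: add or subtract one move of `B`, staying in `ℕ^ι`. -/
def MStep (B : Set (ι → ℤ)) (x y : ι → ℕ) : Prop :=
  ∃ z ∈ B, natToInt y = natToInt x + z ∨ natToInt y = natToInt x - z

/-- `y` is accessible from `x` by the moves of `B` (staying nonnegative throughout,
since all intermediate points are frequency vectors). -/
def Accessible (B : Set (ι → ℤ)) : (ι → ℕ) → (ι → ℕ) → Prop :=
  Relation.ReflTransGen (MStep B)

/-- A Markov basis: a finite set of moves such that every fiber forms a single
equivalence class for mutual accessibility. -/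
def IsMarkovBasis (A : Matrix κ ι ℤ) (B : Set (ι → ℤ)) : Prop :=
  B.Finite ∧ (∀ z ∈ B, IsMove A z) ∧
    ∀ t : κ → ℤ, ∀ x ∈ fiberOf A t, ∀ y ∈ fiberOf A t, Accessible B x y

/-- A minimal Markov basis: no proper subset is a Markov basis. -/
def IsMinimalMarkovBasis (A : Matrix κ ι ℤ) (B : Set (ι → ℤ)) : Prop :=
  IsMarkovBasis A B ∧ ∀ B' ⊂ B, ¬ IsMarkovBasis A B'

/-- An indispensable monomial: every Markov basis contains a move whose
positive or negative part is `x`. -/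
def IsIndispensableMonomial (A : Matrix κ ι ℤ) (x : ι → ℕ) : Prop :=
  ∀ B : Set (ι → ℤ), IsMarkovBasis A B → ∃ z ∈ B, posOf z = x ∨ negOf z = x

/-- `B_n`: the set of moves of degree at most `n`. -/
def Bmoves (A : Matrix κ ι ℤ) (n : ℕ) : Set (ι → ℤ) :=
  {z | IsMove A z ∧ degOf z ≤ n}

/-- The sample size `|t|` of a sufficient statistic `t` (well defined on nonempty
fibers under homogeneity). -/
noncomputable def sampleSize (A : Matrix κ ι ℤ) (t : κ → ℤ) : ℕ :=
  sInf {n | ∃ x ∈ fiberOf A t, ∑ i, x i = n}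

/-- The `B_{|t|-1}`-equivalence classes of the fiber of `t`. -/
noncomputable def fiberClasses (A : Matrix κ ι ℤ) (t : κ → ℤ) : Set (Set (ι → ℕ)) :=
  {C | ∃ x ∈ fiberOf A t,
    C = {y | y ∈ fiberOf A t ∧ Accessible (Bmoves A (sampleSize A t - 1)) x y}}

/-- Homogeneity: some rational vector `w` has `w ⬝ aᵢ = 1` for every column `aᵢ`. -/
def IsHomogeneousMatrix [Fintype κ] (A : Matrix κ ι ℤ) : Prop :=
  ∃ w : κ → ℚ, ∀ i : ι, ∑ j, w j * (A j i : ℚ) = 1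

end Defs

/-- Two sets of moves coincide up to replacing moves `z` by `-z`. -/
def EqUpToSign {ι : Type*} (B₁ B₂ : Set (ι → ℤ)) : Prop :=
  (∀ z ∈ B₁, z ∈ B₂ ∨ -z ∈ B₂) ∧ (∀ z ∈ B₂, z ∈ B₁ ∨ -z ∈ B₁)

section Vectors

variable {ι : Type*}

lemma natToInt_injective : Function.Injective (natToInt : (ι → ℕ) → ι → ℤ) :=
  fun _ _ h => funext fun i => by simpa [natToInt] using congrFun h i

lemma natToInt_add (x y : ι → ℕ) : natToInt (x + y) = natToInt x + natToInt y := by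
  funext i; simp [natToInt]

lemma natToInt_posOf_sub_natToInt_negOf (z : ι → ℤ) :
    natToInt (posOf z) - natToInt (negOf z) = z := by
  funext i; simp only [natToInt, posOf, negOf, Pi.sub_apply]; omega

lemma posOf_neg (z : ι → ℤ) : posOf (-z) = negOf z := rfl

lemma negOf_neg (z : ι → ℤ) : negOf (-z) = posOf z := by
  funext i; simp [negOf, posOf]

lemma negOf_eq_posOf_iff {z : ι → ℤ} : negOf z = posOf z ↔ z = 0 := by
  refine ⟨fun h => ?_, fun h => by subst h; funext i; simp [negOf, posOf]⟩
  rw [← natToInt_posOf_sub_natToInt_negOf z, h, sub_self]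

lemma negOf_le_and_posOf_le_of_eq_add {x y : ι → ℕ} {z : ι → ℤ}
    (h : natToInt y = natToInt x + z) : negOf z ≤ x ∧ posOf z ≤ y := by
  constructor <;> intro i <;> have := congrFun h i <;>
    simp only [natToInt, negOf, posOf, Pi.add_apply] at this ⊢ <;> omega

/-- `conformalKey g ≤ conformalKey z` says that `g` is conformal to `z`: `g⁺ ≤ z⁺` and
`g⁻ ≤ z⁻`. -/
def conformalKey (z : ι → ℤ) : (ι → ℕ) × (ι → ℕ) := (posOf z, negOf z)

lemma conformalKey_injective : Function.Injective (conformalKey : (ι → ℤ) → _) := fun z z' h => by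
  rw [← natToInt_posOf_sub_natToInt_negOf z, ← natToInt_posOf_sub_natToInt_negOf z']
  simp only [conformalKey, Prod.mk.injEq] at h
  rw [h.1, h.2]

lemma eq_of_le_of_sum_le [Fintype ι] {f g : ι → ℕ} (hle : f ≤ g) (hsum : ∑ i, g i ≤ ∑ i, f i) :
    f = g :=
  funext fun i => (Finset.sum_eq_sum_iff_of_le fun j _ => hle j).1
    (le_antisymm (Finset.sum_le_sum fun j _ => hle j) hsum) i (Finset.mem_univ i)

end Vectors

def Joins {ι : Type*} (z : ι → ℤ) (a b : ι → ℕ) : Prop :=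
  (a = negOf z ∧ b = posOf z) ∨ (a = posOf z ∧ b = negOf z)

section Accessible

variable {ι : Type*} {B C : Set (ι → ℤ)} {x y : ι → ℕ} {z : ι → ℤ}

lemma MStep.symm (h : MStep B x y) : MStep B y x := by
  obtain ⟨z, hz, h | h⟩ := h
  · exact ⟨z, hz, Or.inr (by rw [h]; ring)⟩
  · exact ⟨z, hz, Or.inl (by rw [h]; ring)⟩

lemma MStep.add_right (r : ι → ℕ) (h : MStep B x y) : MStep B (x + r) (y + r) := by
  obtain ⟨z, hz, h | h⟩ := h
  · exact ⟨z, hz, Or.inl (by rw [natToInt_add, natToInt_add, h]; ring)⟩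
  · exact ⟨z, hz, Or.inr (by rw [natToInt_add, natToInt_add, h]; ring)⟩

lemma mstep_negOf_posOf (hz : z ∈ B) : MStep B (negOf z) (posOf z) :=
  ⟨z, hz, Or.inl (sub_eq_iff_eq_add'.mp (natToInt_posOf_sub_natToInt_negOf z))⟩

lemma Accessible.symm (h : Accessible B x y) : Accessible B y x := by
  induction h with
  | refl => exact .refl
  | tail _ hstep ih => exact ih.head hstep.symm

lemma Accessible.trans {w : ι → ℕ} (h : Accessible B x y) (h' : Accessible B y w) :
    Accessible B x w :=
  Relation.ReflTransGen.trans h h'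

lemma Accessible.mono (hBC : B ⊆ C) (h : Accessible B x y) : Accessible C x y :=
  Relation.ReflTransGen.mono (fun _ _ ⟨z, hz, h⟩ => ⟨z, hBC hz, h⟩) _ _ h

lemma Accessible.add_right (r : ι → ℕ) (h : Accessible B x y) :
    Accessible B (x + r) (y + r) :=
  Relation.ReflTransGen.lift (· + r) (fun _ _ => MStep.add_right r) _ _ h

lemma Joins.symm {a b : ι → ℕ} (h : Joins z a b) : Joins z b a := by
  rcases h with ⟨rfl, rfl⟩ | ⟨rfl, rfl⟩
  exacts [Or.inr ⟨rfl, rfl⟩, Or.inl ⟨rfl, rfl⟩]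

lemma Joins.accessible {a b : ι → ℕ} (h : Joins z a b)
    (hC : Accessible C (negOf z) (posOf z)) : Accessible C a b := by
  rcases h with ⟨rfl, rfl⟩ | ⟨rfl, rfl⟩
  exacts [hC, hC.symm]

lemma Joins.accessible_negOf_posOf {a b : ι → ℕ} (h : Joins z a b) (hC : Accessible C a b) :
    Accessible C (negOf z) (posOf z) := by
  rcases h with ⟨rfl, rfl⟩ | ⟨rfl, rfl⟩
  exacts [hC, hC.symm]

/-- A step by `z` is a translate of the step from `z⁻` to `z⁺`. -/
lemma Accessible.of_eq_add (hz : Accessible C (negOf z) (posOf z))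
    (h : natToInt y = natToInt x + z) : Accessible C x y := by
  have hle := (negOf_le_and_posOf_le_of_eq_add h).1
  have hx : negOf z + (x - negOf z) = x := by funext i; simpa using Nat.add_sub_cancel' (hle i)
  have hy : posOf z + (x - negOf z) = y := by
    funext i
    have := congrFun h i
    have := hle i
    simp only [natToInt, negOf, posOf, Pi.add_apply, Pi.sub_apply] at *
    omega
  simpa only [hx, hy] using hz.add_right (x - negOf z)

lemma Accessible.of_forall_mem (hBC : ∀ z ∈ B, Accessible C (negOf z) (posOf z))
    (h : Accessible B x y) : Accessible C x y := by
  induction h with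
  | refl => exact .refl
  | tail _ hstep ih =>
    obtain ⟨z, hz, h | h⟩ := hstep
    · exact ih.trans ((hBC z hz).of_eq_add h)
    · exact ih.trans ((hBC z hz).of_eq_add (eq_sub_iff_add_eq.mp h).symm).symm

end Accessible

lemma Relation.ReflTransGen.rel_of_forall_rel_eq_or_eq {α : Type*} {r : α → α → Prop} {a b : α}
    (h : Relation.ReflTransGen r a b) (hab : a ≠ b) (hr : ∀ c, r a c → c = a ∨ c = b) :
    r a b := by
  suffices ∀ x, Relation.ReflTransGen r x b → x = a → r a b from this a h rfl
  intro x hx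
  induction hx using Relation.ReflTransGen.head_induction_on with
  | refl => rintro rfl; exact absurd rfl hab
  | head hxc _ ih =>
    rintro rfl
    rcases hr _ hxc with rfl | rfl
    exacts [ih rfl, hxc]

section Fiber

variable {ι κ : Type*} [Fintype ι] {A : Matrix κ ι ℤ} {B : Set (ι → ℤ)} {t : κ → ℤ}
  {x y : ι → ℕ} {z : ι → ℤ}

lemma isMove_sub_of_mem_fiberOf (hx : x ∈ fiberOf A t) (hy : y ∈ fiberOf A t) :
    IsMove A (natToInt y - natToInt x) := by
  rw [IsMove, Matrix.mulVec_sub, hx.out, hy.out, sub_self]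

lemma mem_fiberOf_of_step (hz : IsMove A z) (hx : x ∈ fiberOf A t)
    (h : natToInt y = natToInt x + z ∨ natToInt y = natToInt x - z) : y ∈ fiberOf A t := by
  rcases h with h | h
  · rw [fiberOf, Set.mem_ofPred_eq, h, Matrix.mulVec_add, hx.out, hz, add_zero]
  · rw [fiberOf, Set.mem_ofPred_eq, h, Matrix.mulVec_sub, hx.out, hz, sub_zero]

lemma MStep.mem_fiberOf (hB : ∀ z ∈ B, IsMove A z) (hx : x ∈ fiberOf A t) (h : MStep B x y) :
    y ∈ fiberOf A t :=
  let ⟨z, hz, h⟩ := h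
  mem_fiberOf_of_step (hB z hz) hx h

lemma Accessible.mem_fiberOf (hB : ∀ z ∈ B, IsMove A z) (hx : x ∈ fiberOf A t)
    (h : Accessible B x y) : y ∈ fiberOf A t := by
  induction h with
  | refl => exact hx
  | tail _ hstep ih => exact hstep.mem_fiberOf hB ih

lemma posOf_mem_fiberOf : posOf z ∈ fiberOf A (A.mulVec (natToInt (posOf z))) := rfl

lemma negOf_mem_fiberOf (hz : IsMove A z) : negOf z ∈ fiberOf A (A.mulVec (natToInt (posOf z))) :=
  mem_fiberOf_of_step hz posOf_mem_fiberOf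
    (Or.inr (eq_sub_of_add_eq (sub_eq_iff_eq_add'.mp (natToInt_posOf_sub_natToInt_negOf z)).symm))

end Fiber

section MarkovBasis

variable {ι κ : Type*} [Fintype ι] {A : Matrix κ ι ℤ} {B C : Set (ι → ℤ)} {z m : ι → ℤ}

lemma IsMarkovBasis.of_forall_accessible (hB : IsMarkovBasis A B) (hC : C.Finite)
    (hCm : ∀ z ∈ C, IsMove A z) (h : ∀ z ∈ B, Accessible C (negOf z) (posOf z)) :
    IsMarkovBasis A C :=
  ⟨hC, hCm, fun t x hx y hy => (hB.2.2 t x hx y hy).of_forall_mem h⟩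

lemma IsMarkovBasis.exists_minimal_subset (hB : IsMarkovBasis A B) :
    ∃ C ⊆ B, IsMinimalMarkovBasis A C := by
  have hfin : {C | C ⊆ B ∧ IsMarkovBasis A C}.Finite :=
    hB.1.finite_subsets.subset fun _ hC => hC.1
  obtain ⟨C, ⟨hCB, hC⟩, hmin⟩ := hfin.exists_minimal ⟨B, subset_rfl, hB⟩
  exact ⟨C, hCB, hC, fun C' hC' hC'm => hC'.2 (hmin ⟨hC'.1.trans hCB, hC'm⟩ hC'.1)⟩

lemma IsMinimalMarkovBasis.not_accessible_sdiff (hB : IsMinimalMarkovBasis A B) (hz : z ∈ B) :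
    ¬ Accessible (B \ {z}) (negOf z) (posOf z) := fun h =>
  hB.2 _ (Set.sdiff_singleton_ssubset.2 hz) <|
    hB.1.of_forall_accessible (hB.1.1.sdiff) (fun w hw => hB.1.2.1 w hw.1) fun w hw => by
      by_cases hwz : w = z
      · exact hwz ▸ h
      · exact .single (mstep_negOf_posOf ⟨hw, hwz⟩)

lemma IsMinimalMarkovBasis.ne_zero (hB : IsMinimalMarkovBasis A B) (hz : z ∈ B) : z ≠ 0 := by
  rintro rfl
  exact hB.not_accessible_sdiff hz (negOf_eq_posOf_iff.2 rfl ▸ .refl)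

lemma IsMinimalMarkovBasis.neg_notMem (hB : IsMinimalMarkovBasis A B) (hz : z ∈ B) : -z ∉ B := by
  intro hneg
  have hne : -z ≠ z := fun h => hB.ne_zero hz (self_eq_neg.mp h.symm)
  have : Accessible (B \ {z}) (negOf (-z)) (posOf (-z)) := .single (mstep_negOf_posOf ⟨hneg, hne⟩)
  rw [negOf_neg, posOf_neg] at this
  exact hB.not_accessible_sdiff hz this.symm

lemma IsMarkovBasis.mem_or_neg_mem_of_encard_eq_two (hB : IsMarkovBasis A B) (hz : IsMove A z)
    (hz0 : z ≠ 0) (h2 : (fiberOf A (A.mulVec (natToInt (posOf z)))).encard = 2) :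
    z ∈ B ∨ -z ∈ B := by
  have hne : negOf z ≠ posOf z := mt negOf_eq_posOf_iff.1 hz0
  have hF : fiberOf A (A.mulVec (natToInt (posOf z))) = {negOf z, posOf z} :=
    ((Set.toFinite _).eq_of_subset_of_encard_le
      (Set.pair_subset (negOf_mem_fiberOf hz) posOf_mem_fiberOf)
      (by rw [h2, Set.encard_pair hne])).symm
  have hacc := hB.2.2 _ _ (negOf_mem_fiberOf hz) _ posOf_mem_fiberOf
  obtain ⟨w, hw, h | h⟩ := hacc.rel_of_forall_rel_eq_or_eq hne fun c hc => by
    simpa [hF] using hc.mem_fiberOf hB.2.1 (negOf_mem_fiberOf hz)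
  · left
    convert hw
    rw [← natToInt_posOf_sub_natToInt_negOf z, h, add_sub_cancel_left]
  · right
    convert hw
    rw [← natToInt_posOf_sub_natToInt_negOf z, h]
    ring

/-- `insert m (B \ {z})` is a Markov basis, and a minimal basis inside it contains neither `z`
nor `-z`. -/
lemma IsMinimalMarkovBasis.exists_not_eqUpToSign_of_accessible (hB : IsMinimalMarkovBasis A B)
    (hz : z ∈ B) (hm : IsMove A m) (hmz : m ≠ z) (hmz' : m ≠ -z)
    (hacc : Accessible (insert m (B \ {z})) (negOf z) (posOf z)) :
    ∃ B', IsMinimalMarkovBasis A B' ∧ ¬ EqUpToSign B B' := by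
  have hB₂ : IsMarkovBasis A (insert m (B \ {z})) := by
    refine hB.1.of_forall_accessible (hB.1.1.sdiff.insert m) ?_ fun w hw => ?_
    · rintro w (rfl | hw)
      exacts [hm, hB.1.2.1 w hw.1]
    · by_cases hwz : w = z
      · exact hwz ▸ hacc
      · exact .single (mstep_negOf_posOf (Or.inr ⟨hw, hwz⟩))
  obtain ⟨B', hB'sub, hB'⟩ := hB₂.exists_minimal_subset
  refine ⟨B', hB', fun heq => ?_⟩
  rcases heq.1 z hz with h | h
  · rcases hB'sub h with h | h
    exacts [hmz h.symm, h.2 rfl]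
  · rcases hB'sub h with h | h
    exacts [hmz' h.symm, hB.neg_notMem hz h.1]

end MarkovBasis

section Graver

variable {ι κ : Type*} [Fintype ι] {A : Matrix κ ι ℤ} {x y : ι → ℕ} {g : ι → ℤ}

/-- The Graver basis: the conformally minimal nonzero moves. -/
def graverBasis (A : Matrix κ ι ℤ) : Set (ι → ℤ) :=
  conformalKey ⁻¹' {k | Minimal (· ∈ conformalKey '' {z | IsMove A z ∧ z ≠ 0}) k}

/-- Dickson's lemma: the conformally minimal keys form an antichain in a well-quasi-order. -/
lemma graverBasis_finite : (graverBasis A).Finite :=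
  (WellQuasiOrderedLE.finite_of_isAntichain (setOfPred_minimal_antichain _)).preimage
    conformalKey_injective.injOn

lemma isMove_and_ne_zero_of_mem_graverBasis (hg : g ∈ graverBasis A) : IsMove A g ∧ g ≠ 0 := by
  obtain ⟨g', hg', h⟩ := hg.prop
  exact conformalKey_injective h ▸ hg'

lemma exists_mem_graverBasis_conformalKey_le {z : ι → ℤ} (hz : IsMove A z) (hz0 : z ≠ 0) :
    ∃ g ∈ graverBasis A, conformalKey g ≤ conformalKey z := by
  obtain ⟨k, hk, hmin⟩ := exists_minimal_le_of_wellFoundedLT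
    (· ∈ conformalKey '' {z | IsMove A z ∧ z ≠ 0}) (conformalKey z) ⟨z, ⟨hz, hz0⟩, rfl⟩
  obtain ⟨g, -, rfl⟩ := hmin.prop
  exact ⟨g, hmin, hk⟩

lemma exists_eq_add_of_conformalKey_le
    (hg : conformalKey g ≤ conformalKey (natToInt y - natToInt x)) (hg0 : g ≠ 0) :
    ∃ x', natToInt x' = natToInt x + g ∧
      ∑ i, (natToInt y i - natToInt x' i).natAbs < ∑ i, (natToInt y i - natToInt x i).natAbs := by
  have hcomp (i : ι) := And.intro (hg.1 i) (hg.2 i)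
  simp only [conformalKey, posOf, negOf, natToInt, Pi.sub_apply] at hcomp
  refine ⟨fun i => (x i + g i).toNat, funext fun i => ?_, ?_⟩
  · have := hcomp i
    simp only [natToInt, Pi.add_apply]
    omega
  · obtain ⟨i, hi⟩ := Function.ne_iff.1 hg0
    refine Finset.sum_lt_sum (fun j _ => ?_) ⟨i, Finset.mem_univ i, ?_⟩
    · have := hcomp j
      simp only [natToInt]
      omega
    · have := hcomp i
      simp only [natToInt, Pi.zero_apply] at hi ⊢
      omega

lemma isMarkovBasis_graverBasis : IsMarkovBasis A (graverBasis A) := by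
  have hG : ∀ g ∈ graverBasis A, IsMove A g := fun g hg =>
    (isMove_and_ne_zero_of_mem_graverBasis hg).1
  refine ⟨graverBasis_finite, hG, fun t x hx y hy => ?_⟩
  induction hn : ∑ i, (natToInt y i - natToInt x i).natAbs using Nat.strong_induction_on
    generalizing x with
  | _ n ih =>
  by_cases hxy : x = y
  · exact hxy ▸ .refl
  have hv0 : natToInt y - natToInt x ≠ 0 := sub_ne_zero.2 fun h => hxy (natToInt_injective h).symm
  obtain ⟨g, hg, hgle⟩ :=
    exists_mem_graverBasis_conformalKey_le (isMove_sub_of_mem_fiberOf hx hy) hv0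
  obtain ⟨x', hx', hlt⟩ :=
    exists_eq_add_of_conformalKey_le hgle (isMove_and_ne_zero_of_mem_graverBasis hg).2
  have hstep : MStep (graverBasis A) x x' := ⟨g, hg, Or.inl hx'⟩
  exact (ih _ (hn ▸ hlt) x' (hstep.mem_fiberOf hG hx) rfl).head hstep

lemma exists_isMinimalMarkovBasis (A : Matrix κ ι ℤ) : ∃ B, IsMinimalMarkovBasis A B :=
  let ⟨B, _, hB⟩ := (isMarkovBasis_graverBasis (A := A)).exists_minimal_subset
  ⟨B, hB⟩

end Graver

section Homogeneous

variable {ι κ : Type*} [Fintype ι] [Fintype κ] {A : Matrix κ ι ℤ} {B : Set (ι → ℤ)}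
  {t : κ → ℤ} {x y : ι → ℕ} {z : ι → ℤ}

/-- If `w ⬝ aᵢ = 1` for all columns, then `∑ᵢ zᵢ = w ⬝ (A z) = 0`. -/
lemma IsHomogeneousMatrix.sum_eq_zero (hA : IsHomogeneousMatrix A) (hz : IsMove A z) :
    ∑ i, z i = 0 := by
  obtain ⟨w, hw⟩ := hA
  have hwA : Matrix.vecMul w (A.map (Int.castRingHom ℚ)) = fun _ => 1 :=
    funext fun i => by simpa [Matrix.vecMul, dotProduct] using hw i
  have hAz : (A.map (Int.castRingHom ℚ)).mulVec (Int.castRingHom ℚ ∘ z) = 0 :=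
    funext fun j => by rw [← RingHom.map_mulVec, hz]; simp
  have h := Matrix.dotProduct_mulVec w (A.map (Int.castRingHom ℚ)) (Int.castRingHom ℚ ∘ z)
  rw [hAz, hwA, dotProduct_zero] at h
  exact_mod_cast (by simpa [dotProduct] using h.symm : ∑ i, (z i : ℚ) = 0)

lemma IsHomogeneousMatrix.sum_negOf (hA : IsHomogeneousMatrix A) (hz : IsMove A z) :
    ∑ i, negOf z i = degOf z := by
  have h := hA.sum_eq_zero hz
  rw [← natToInt_posOf_sub_natToInt_negOf z] at h
  simp only [Pi.sub_apply, natToInt, Finset.sum_sub_distrib, sub_eq_zero] at h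
  exact_mod_cast h.symm

lemma IsHomogeneousMatrix.sampleSize_eq (hA : IsHomogeneousMatrix A) (hx : x ∈ fiberOf A t) :
    sampleSize A t = ∑ i, x i := by
  have hset : {n | ∃ y ∈ fiberOf A t, ∑ i, y i = n} = {∑ i, x i} := by
    refine Set.eq_singleton_iff_unique_mem.2 ⟨⟨x, hx, rfl⟩, ?_⟩
    rintro _ ⟨y, hy, rfl⟩
    have h := hA.sum_eq_zero (isMove_sub_of_mem_fiberOf hx hy)
    simp only [Pi.sub_apply, natToInt, Finset.sum_sub_distrib, sub_eq_zero] at h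
    exact_mod_cast h
  rw [sampleSize, hset, csInf_singleton]

lemma IsHomogeneousMatrix.sampleSize_posOf (hA : IsHomogeneousMatrix A) :
    sampleSize A (A.mulVec (natToInt (posOf z))) = degOf z :=
  hA.sampleSize_eq posOf_mem_fiberOf

lemma IsHomogeneousMatrix.degOf_pos (hA : IsHomogeneousMatrix A) (hz : IsMove A z) (hz0 : z ≠ 0) :
    0 < degOf z := by
  refine Nat.pos_of_ne_zero fun h => hz0 (negOf_eq_posOf_iff.1 (funext fun i => ?_))
  have hpos := Finset.sum_eq_zero_iff.1 h i (Finset.mem_univ i)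
  have hneg := Finset.sum_eq_zero_iff.1 ((hA.sum_negOf hz).trans h) i (Finset.mem_univ i)
  rw [hpos, hneg]

lemma IsHomogeneousMatrix.degOf_le_sampleSize (hA : IsHomogeneousMatrix A) (hz : IsMove A z)
    (hx : x ∈ fiberOf A t) (h : natToInt y = natToInt x + z ∨ natToInt y = natToInt x - z) :
    degOf z ≤ sampleSize A t := by
  rcases h with h | h
  · rw [← hA.sum_negOf hz, hA.sampleSize_eq hx]
    exact Finset.sum_le_sum fun i _ => (negOf_le_and_posOf_le_of_eq_add h).1 i
  · rw [hA.sampleSize_eq hx]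
    exact Finset.sum_le_sum fun i _ =>
      (negOf_le_and_posOf_le_of_eq_add (eq_sub_iff_add_eq.1 h).symm).2 i

/-- `z⁻ ≤ x` and `z⁺ ≤ y`, where `x`, `y` have total size `|t| ≤ deg z = |z⁻| = |z⁺|`. -/
lemma IsHomogeneousMatrix.eq_negOf_and_eq_posOf_of_sampleSize_le (hA : IsHomogeneousMatrix A)
    (hz : IsMove A z) (hx : x ∈ fiberOf A t) (h : natToInt y = natToInt x + z)
    (hdeg : sampleSize A t ≤ degOf z) :
    x = negOf z ∧ y = posOf z := by
  have hy := mem_fiberOf_of_step hz hx (Or.inl h)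
  obtain ⟨hx', hy'⟩ := negOf_le_and_posOf_le_of_eq_add h
  refine ⟨(eq_of_le_of_sum_le hx' ?_).symm, (eq_of_le_of_sum_le hy' ?_).symm⟩
  · rwa [hA.sum_negOf hz, ← hA.sampleSize_eq hx]
  · rwa [← hA.sampleSize_eq hy]

lemma IsHomogeneousMatrix.joins_of_sampleSize_le (hA : IsHomogeneousMatrix A) (hz : IsMove A z)
    (hx : x ∈ fiberOf A t) (h : natToInt y = natToInt x + z ∨ natToInt y = natToInt x - z)
    (hdeg : sampleSize A t ≤ degOf z) : Joins z x y := by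
  rcases h with h | h
  · exact Or.inl (hA.eq_negOf_and_eq_posOf_of_sampleSize_le hz hx h hdeg)
  · have h' := (eq_sub_iff_add_eq.1 h).symm
    have hy := mem_fiberOf_of_step hz hx (Or.inr h)
    exact Or.inr (hA.eq_negOf_and_eq_posOf_of_sampleSize_le hz hy h' hdeg).symm

lemma IsHomogeneousMatrix.accessible_degOf_le (hA : IsHomogeneousMatrix A)
    (hB : ∀ z ∈ B, IsMove A z) (hx : x ∈ fiberOf A t) (h : Accessible B x y) :
    Accessible {z ∈ B | degOf z ≤ sampleSize A t} x y := by
  induction h with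
  | refl => exact .refl
  | tail hxb hstep ih =>
    obtain ⟨w, hw, h⟩ := hstep
    have hbF := Accessible.mem_fiberOf hB hx hxb
    exact ih.tail ⟨w, ⟨hw, hA.degOf_le_sampleSize (hB w hw) hbF h⟩, h⟩

lemma IsHomogeneousMatrix.accessible_sdiff_of_degOf_lt (hA : IsHomogeneousMatrix A)
    (hB : IsMarkovBasis A B) {w : ι → ℤ} (hw : IsMove A w) (hlt : degOf w < degOf z) :
    Accessible (B \ {z}) (negOf w) (posOf w) := by
  have h := hA.accessible_degOf_le hB.2.1 (negOf_mem_fiberOf hw)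
    (hB.2.2 _ _ (negOf_mem_fiberOf hw) _ posOf_mem_fiberOf)
  rw [hA.sampleSize_posOf] at h
  exact h.mono fun v hv => ⟨hv.1, by rintro rfl; exact absurd hv.2 (not_le.2 hlt)⟩

lemma IsHomogeneousMatrix.accessible_sdiff_of_accessible_bmoves (hA : IsHomogeneousMatrix A)
    (hB : IsMarkovBasis A B) {k : ℕ} (hk : k < degOf z) (h : Accessible (Bmoves A k) x y) :
    Accessible (B \ {z}) x y :=
  h.of_forall_mem fun _ hw => hA.accessible_sdiff_of_degOf_lt hB hw.1 (hw.2.trans_lt hk)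

lemma IsMinimalMarkovBasis.not_accessible_bmoves (hA : IsHomogeneousMatrix A)
    (hB : IsMinimalMarkovBasis A B) (hz : z ∈ B) :
    ¬ Accessible (Bmoves A (degOf z - 1)) (negOf z) (posOf z) := fun h =>
  hB.not_accessible_sdiff hz <| hA.accessible_sdiff_of_accessible_bmoves hB.1
    (Nat.sub_one_lt (hA.degOf_pos (hB.1.2.1 z hz) (hB.ne_zero hz)).ne') h

lemma IsHomogeneousMatrix.mem_or_neg_mem_of_forall_fiberOf (hA : IsHomogeneousMatrix A)
    (hfib : ∀ t : κ → ℤ, (fiberOf A t).Nonempty →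
      ((∀ x ∈ fiberOf A t, ∀ y ∈ fiberOf A t, Accessible (Bmoves A (sampleSize A t - 1)) x y) ∨
        (fiberOf A t).encard = 2))
    {B₁ B₂ : Set (ι → ℤ)} (hB₁ : IsMinimalMarkovBasis A B₁) (hB₂ : IsMarkovBasis A B₂)
    (hz : z ∈ B₁) : z ∈ B₂ ∨ -z ∈ B₂ := by
  have hzm := hB₁.1.2.1 z hz
  rcases hfib _ ⟨_, posOf_mem_fiberOf⟩ with hone | htwo
  · have h := hone _ (negOf_mem_fiberOf hzm) _ posOf_mem_fiberOf
    rw [hA.sampleSize_posOf] at h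
    exact absurd h (hB₁.not_accessible_bmoves hA hz)
  · exact hB₂.mem_or_neg_mem_of_encard_eq_two hzm (hB₁.ne_zero hz) htwo

lemma IsHomogeneousMatrix.negOf_sub_eq_and_posOf_sub_eq (hA : IsHomogeneousMatrix A)
    (hx : x ∈ fiberOf A t) (hy : y ∈ fiberOf A t)
    (hxy : ¬ Accessible (Bmoves A (sampleSize A t - 1)) x y) :
    negOf (natToInt y - natToInt x) = x ∧ posOf (natToInt y - natToInt x) = y := by
  have hm := isMove_sub_of_mem_fiberOf hx hy
  have hstep : natToInt y = natToInt x + (natToInt y - natToInt x) := (add_sub_cancel _ _).symm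
  have hge : sampleSize A t ≤ degOf (natToInt y - natToInt x) := by
    by_contra hlt
    exact hxy (.single ⟨_, ⟨hm, by omega⟩, Or.inl hstep⟩)
  obtain ⟨h₁, h₂⟩ := hA.eq_negOf_and_eq_posOf_of_sampleSize_le hm hx hstep hge
  exact ⟨h₁.symm, h₂.symm⟩

/-- Some step of the path crosses between `B_{|t|-1}`-classes; it has full degree `|t|`, so its
move joins its two endpoints. -/
lemma IsHomogeneousMatrix.exists_mem_not_accessible_bmoves (hA : IsHomogeneousMatrix A)
    (hB : ∀ z ∈ B, IsMove A z) (hx : x ∈ fiberOf A t) (h : Accessible B x y)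
    (hxy : ¬ Accessible (Bmoves A (sampleSize A t - 1)) x y) :
    ∃ z ∈ B, negOf z ∈ fiberOf A t ∧ posOf z ∈ fiberOf A t ∧
      ¬ Accessible (Bmoves A (sampleSize A t - 1)) (negOf z) (posOf z) := by
  induction h with
  | refl => exact absurd .refl hxy
  | @tail b c hxb hbc ih =>
    by_cases hb : Accessible (Bmoves A (sampleSize A t - 1)) x b
    · have hbF := Accessible.mem_fiberOf hB hx hxb
      have hcF := hbc.mem_fiberOf hB hbF
      have hbc' : ¬ Accessible (Bmoves A (sampleSize A t - 1)) b c := fun h => hxy (hb.trans h)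
      obtain ⟨w, hw, hstep⟩ := hbc
      have hdeg : sampleSize A t ≤ degOf w := by
        by_contra hlt
        exact hbc' (.single ⟨w, ⟨hB w hw, by omega⟩, hstep⟩)
      have hj := hA.joins_of_sampleSize_le (hB w hw) hbF hstep hdeg
      refine ⟨w, hw, ?_, ?_, fun h => hbc' (hj.accessible h)⟩ <;>
        rcases hj with ⟨rfl, rfl⟩ | ⟨rfl, rfl⟩ <;> assumption
    · exact ih hb

/-- Cut a path at its first use of `z`: before that it only uses `B \ {z}`, and the first step by
`z` (of full degree `|t|`) starts at `z⁻` or `z⁺`. -/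
lemma IsHomogeneousMatrix.accessible_sdiff_or_of_degOf_eq (hA : IsHomogeneousMatrix A)
    (hB : ∀ w ∈ B, IsMove A w) (hz : degOf z = sampleSize A t) (hx : x ∈ fiberOf A t)
    (h : Accessible B x y) :
    Accessible (B \ {z}) x y ∨ Accessible (B \ {z}) x (negOf z) ∨
      Accessible (B \ {z}) x (posOf z) := by
  induction h with
  | refl => exact Or.inl .refl
  | tail hxb hbc ih =>
    rcases ih with ih | ih
    · obtain ⟨w, hw, hstep⟩ := hbc
      by_cases hwz : w = z
      · subst hwz
        rcases hA.joins_of_sampleSize_le (hB w hw) (Accessible.mem_fiberOf hB hx hxb) hstep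
          hz.ge with ⟨rfl, -⟩ | ⟨rfl, -⟩
        exacts [Or.inr (Or.inl ih), Or.inr (Or.inr ih)]
      · exact Or.inl (ih.tail ⟨w, ⟨hw, hwz⟩, hstep⟩)
    · exact Or.inr ih

/-- Replace the move `z` joining `a` and `b` by the move `b - u`, where `u` is reachable from `a`
without `z` but lies outside the `B_{|t|-1}`-class of `b`. -/
lemma IsMinimalMarkovBasis.exists_not_eqUpToSign_of_joins (hA : IsHomogeneousMatrix A)
    (hB : IsMinimalMarkovBasis A B) (hz : z ∈ B) {a b u : ι → ℕ} (hj : Joins z a b)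
    (hb : b ∈ fiberOf A t) (hu : u ∈ fiberOf A t)
    (hub : ¬ Accessible (Bmoves A (sampleSize A t - 1)) u b) (hua : u ≠ a)
    (hau : Accessible (B \ {z}) a u) :
    ∃ B', IsMinimalMarkovBasis A B' ∧ ¬ EqUpToSign B B' := by
  obtain ⟨hneg, -⟩ := hA.negOf_sub_eq_and_posOf_sub_eq hu hb hub
  have hub' : u ≠ b := fun h => hub (h ▸ .refl)
  have hu_z : u ≠ negOf z ∧ u ≠ posOf z := by
    rcases hj with ⟨rfl, rfl⟩ | ⟨rfl, rfl⟩
    exacts [⟨hua, hub'⟩, ⟨hub', hua⟩]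
  refine hB.exists_not_eqUpToSign_of_accessible hz (isMove_sub_of_mem_fiberOf hu hb)
    (fun h => hu_z.1 (by rw [← hneg, h])) (fun h => hu_z.2 (by rw [← hneg, h, negOf_neg]))
    (hj.accessible_negOf_posOf ((hau.mono (Set.subset_insert _ _)).tail ?_))
  exact ⟨_, Set.mem_insert _ _, Or.inl (add_sub_cancel _ _).symm⟩

lemma IsMinimalMarkovBasis.exists_not_eqUpToSign_of_mem_fiberOf (hA : IsHomogeneousMatrix A)
    (hB : IsMinimalMarkovBasis A B) (hz : z ∈ B) (hneg : negOf z ∈ fiberOf A t)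
    (hpos : posOf z ∈ fiberOf A t)
    (hcross : ¬ Accessible (Bmoves A (sampleSize A t - 1)) (negOf z) (posOf z))
    {c : ι → ℕ} (hc : c ∈ fiberOf A t) (hcneg : c ≠ negOf z) (hcpos : c ≠ posOf z) :
    ∃ B', IsMinimalMarkovBasis A B' ∧ ¬ EqUpToSign B B' := by
  have hdeg : degOf z = sampleSize A t := (hA.sampleSize_eq hpos).symm
  have hsdiff {u v : ι → ℕ} (h : Accessible (Bmoves A (sampleSize A t - 1)) u v) :
      Accessible (B \ {z}) u v :=
    hA.accessible_sdiff_of_accessible_bmoves hB.1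
      (hdeg ▸ Nat.sub_one_lt (hA.degOf_pos (hB.1.2.1 z hz) (hB.ne_zero hz)).ne') h
  have key (a b : ι → ℕ) (hj : Joins z a b) (hca : Accessible (B \ {z}) c a) :
      ∃ B', IsMinimalMarkovBasis A B' ∧ ¬ EqUpToSign B B' := by
    have hnab : ¬ Accessible (Bmoves A (sampleSize A t - 1)) a b :=
      fun h => hcross (hj.accessible_negOf_posOf h)
    obtain ⟨ha, hb, hca', hcb'⟩ : a ∈ fiberOf A t ∧ b ∈ fiberOf A t ∧ c ≠ a ∧ c ≠ b := by
      rcases hj with ⟨rfl, rfl⟩ | ⟨rfl, rfl⟩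
      exacts [⟨hneg, hpos, hcneg, hcpos⟩, ⟨hpos, hneg, hcpos, hcneg⟩]
    -- if `c` is in the class of `b`, exchange with the roles of `a` and `b` swapped
    by_cases hcb : Accessible (Bmoves A (sampleSize A t - 1)) c b
    · exact hB.exists_not_eqUpToSign_of_joins hA hz hj.symm ha hc
        (fun h => hnab (h.symm.trans hcb)) hcb' (hsdiff hcb).symm
    · exact hB.exists_not_eqUpToSign_of_joins hA hz hj hb hc hcb hca' hca.symm
  rcases hA.accessible_sdiff_or_of_degOf_eq hB.1.2.1 hdeg hc (hB.1.2.2 t c hc _ hneg) with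
    h | h | h
  · exact key _ _ (Or.inl ⟨rfl, rfl⟩) h
  · exact key _ _ (Or.inl ⟨rfl, rfl⟩) h
  · exact key _ _ (Or.inr ⟨rfl, rfl⟩) h

lemma IsHomogeneousMatrix.exists_not_eqUpToSign (hA : IsHomogeneousMatrix A)
    (hxy : ∃ x ∈ fiberOf A t, ∃ y ∈ fiberOf A t,
      ¬ Accessible (Bmoves A (sampleSize A t - 1)) x y)
    (h2 : (fiberOf A t).encard ≠ 2) :
    ∃ B₁ B₂, IsMinimalMarkovBasis A B₁ ∧ IsMinimalMarkovBasis A B₂ ∧ ¬ EqUpToSign B₁ B₂ := by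
  obtain ⟨x, hx, y, hy, hxy⟩ := hxy
  obtain ⟨B, hB⟩ := exists_isMinimalMarkovBasis A
  obtain ⟨z, hz, hneg, hpos, hcross⟩ :=
    hA.exists_mem_not_accessible_bmoves hB.1.2.1 hx (hB.1.2.2 t x hx y hy) hxy
  obtain ⟨c, hc, hcz⟩ : ∃ c ∈ fiberOf A t, c ∉ ({negOf z, posOf z} : Set (ι → ℕ)) := by
    by_contra! hsub
    refine h2 ?_
    rw [Set.Subset.antisymm hsub (Set.pair_subset hneg hpos),
      Set.encard_pair fun h : negOf z = posOf z => hcross (h ▸ .refl)]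
  obtain ⟨B', hB', hne⟩ := hB.exists_not_eqUpToSign_of_mem_fiberOf hA hz hneg hpos hcross hc
    (fun h => hcz (Or.inl h)) (fun h => hcz (Or.inr h))
  exact ⟨B, B', hB, hB', hne⟩

end Homogeneous

theorem minimalMarkovBasis_unique_iff_general
    {p d : ℕ}
    (A : Matrix (Fin d) (Fin p) ℤ) (hA : IsHomogeneousMatrix A) :
    (∀ B₁ B₂ : Set (Fin p → ℤ), IsMinimalMarkovBasis A B₁ → IsMinimalMarkovBasis A B₂ →
        EqUpToSign B₁ B₂) ↔
      ∀ t : Fin d → ℤ, (fiberOf A t).Nonempty →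
        ((∀ x ∈ fiberOf A t, ∀ y ∈ fiberOf A t,
            Accessible (Bmoves A (sampleSize A t - 1)) x y) ∨
          (fiberOf A t).encard = 2) := by
  constructor
  · intro huniq t _
    by_contra! h
    obtain ⟨B₁, B₂, hB₁, hB₂, hne⟩ := hA.exists_not_eqUpToSign h.1 h.2
    exact hne (huniq B₁ B₂ hB₁ hB₂)
  · intro hfib B₁ B₂ hB₁ hB₂
    exact ⟨fun z hz => hA.mem_or_neg_mem_of_forall_fiberOf hfib hB₁ hB₂.1 hz,
      fun z hz => hA.mem_or_neg_mem_of_forall_fiberOf hfib hB₂ hB₁.1 hz⟩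

/-- a minimal Markov basis is unique up to sign iff every nonempty fiber
forms a single `B_{|t|-1}`-equivalence class or has exactly two elements. -/
theorem minimalMarkovBasis_unique_iff
    {p d : ℕ} (hp : 0 < p) (hd : 0 < d)
    (A : Matrix (Fin d) (Fin p) ℤ) (hA : IsHomogeneousMatrix A) :
    (∀ B₁ B₂ : Set (Fin p → ℤ), IsMinimalMarkovBasis A B₁ → IsMinimalMarkovBasis A B₂ →
        EqUpToSign B₁ B₂) ↔
      ∀ t : Fin d → ℤ, (fiberOf A t).Nonempty →
        ((∀ x ∈ fiberOf A t, ∀ y ∈ fiberOf A t,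
            Accessible (Bmoves A (sampleSize A t - 1)) x y) ∨
          (fiberOf A t).encard = 2) :=
  minimalMarkovBasis_unique_iff_general A hA
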